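/- Let m ≥ 2. For every n ≥ 2, the palindromic prefix u_n of the m-bonacci word is closed; more precisely, u_{n-1} is a border of u_n that has no internal occurrence in u_n (it occurs exactly twice in u_n, as a prefix and as a suffix). -/

import Mathlib

/-! With `ψ w = φ_m(w) 0` we have `ub (k+1) = ψ (ub k)`, and `ψ` can be desubstituted: every `0`
of `ψ w` starts a block `φ_m(a)`, and `ψ u <+: ψ v` forces `u <+: v`. Hence an occurrence of
`ub (j+1)` at a position `p > 0` of `ub (K+1)` comes from an occurrence of `ub j` at a position
`q > 0` of `ub K` with `p = |φ_m (take q (ub K))|`, and induction on `j` gives `|hb j| ≤ p`.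
As `ub (j+1) = hb j ++ ub j`, the only occurrences of `ub j` in `ub (j+1)` are at `0` and
`|hb j|`. -/

/-- The `m`-bonacci morphism on letters: `i ↦ 0(i+1)` for `i ≤ m-2`, `(m-1) ↦ 0`. -/
def phi (m a : ℕ) : List ℕ := if a = m - 1 then [0] else [0, a + 1]

/-- The `m`-bonacci morphism on words. -/
def phiW (m : ℕ) (w : List ℕ) : List ℕ := w.flatMap (phi m)

/-- The finite `m`-bonacci words `h_n = φ_m^n(0)`. -/
def hb (m : ℕ) : ℕ → List ℕ
  | 0 => [0]
  | n+1 => phiW m (hb m n)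

/-- The palindromic prefixes of the `m`-bonacci word, shifted:
`ub m n` is the paper's `u_{n+1}` (so `ub m 0 = u₁ = ε`, and `u_{n+2} = h_n u_{n+1}`). -/
def ub (m : ℕ) : ℕ → List ℕ
  | 0 => []
  | n+1 => hb m n ++ ub m n

/-- Number of occurrences of `x` as a factor of `w` (counted by starting position). -/
def occ (x w : List ℕ) : ℕ :=
  ((List.range (w.length + 1)).filter (fun i => x.isPrefixOf (w.drop i))).length

/-- A word is closed if it is a single letter or has a border (a proper factor that
is both a prefix and a suffix) occurring exactly twice in it. -/
def ClosedWord (w : List ℕ) : Prop :=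
  w.length = 1 ∨
    ∃ x : List ℕ, x ≠ [] ∧ x.length < w.length ∧ x <+: w ∧ x <:+ w ∧ occ x w = 2

lemma occ_eq_two {x w : List ℕ} {L : ℕ} (hL : 0 < L) (hLw : L ≤ w.length)
    (h : ∀ i ≤ w.length, x <+: w.drop i ↔ i = 0 ∨ i = L) : occ x w = 2 := by
  have hperm : ((List.range (w.length + 1)).filter fun i => x.isPrefixOf (w.drop i)).Perm
      [0, L] := by
    refine (List.perm_ext_iff_of_nodup (List.nodup_range.filter _) (by simpa using hL.ne)).mpr
      fun i => ?_
    simp only [List.mem_filter, List.mem_range, List.isPrefixOf_iff_prefix, List.mem_cons,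
      List.not_mem_nil, or_false]
    constructor
    · rintro ⟨hi, hx⟩
      exact (h i (by omega)).mp hx
    · intro hi
      exact ⟨by omega, (h i (by omega)).mpr hi⟩
  exact hperm.length_eq

section

variable (m : ℕ)

lemma phi_eq_cons (a : ℕ) : phi m a = 0 :: (if a = m - 1 then [] else [a + 1]) := by
  unfold phi; split_ifs <;> rfl

lemma phiW_cons (a : ℕ) (w : List ℕ) : phiW m (a :: w) = phi m a ++ phiW m w := by
  simp [phiW]

lemma phiW_append (w z : List ℕ) : phiW m (w ++ z) = phiW m w ++ phiW m z := by
  simp [phiW]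

lemma phiW_prefix {w z : List ℕ} (h : w <+: z) : phiW m w <+: phiW m z := by
  obtain ⟨t, rfl⟩ := h
  exact ⟨phiW m t, (phiW_append m w t).symm⟩

lemma exists_phiW_append_zero_eq_cons (w : List ℕ) : ∃ t, phiW m w ++ [0] = 0 :: t := by
  cases w with
  | nil => exact ⟨[], rfl⟩
  | cons a w => exact ⟨_, by rw [phiW_cons, phi_eq_cons, List.cons_append, List.cons_append]⟩

lemma phiW_append_zero_prefix {w z : List ℕ} (h : w <+: z) :
    phiW m w ++ [0] <+: phiW m z ++ [0] := by
  obtain ⟨t, rfl⟩ := h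
  obtain ⟨s, hs⟩ := exists_phiW_append_zero_eq_cons m t
  exact ⟨s, by simp [phiW_append, hs]⟩

/-- The letter after the leading `0` of a block `φ_m(a)` is `0` exactly when `a = m - 1`. -/
lemma phi_tail_append_prefix {a b : ℕ} {s t : List ℕ}
    (h : (if a = m - 1 then [] else [a + 1]) ++ 0 :: s <+:
      (if b = m - 1 then [] else [b + 1]) ++ 0 :: t) :
    a = b ∧ 0 :: s <+: 0 :: t := by
  split_ifs at h <;> simp only [List.nil_append, List.cons_append, List.cons_prefix_cons] at h <;>
    grind

lemma prefix_of_phiW_append_zero_prefix :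
    ∀ {w z : List ℕ}, phiW m w ++ [0] <+: phiW m z ++ [0] → w <+: z
  | [], _, _ => List.nil_prefix
  | a :: w, [], h => by
    have := h.length_le
    simp [phiW_cons, phi_eq_cons, show phiW m [] = [] from rfl] at this
  | a :: w, b :: z, h => by
    obtain ⟨s, hs⟩ := exists_phiW_append_zero_eq_cons m w
    obtain ⟨t, ht⟩ := exists_phiW_append_zero_eq_cons m z
    simp only [phiW_cons, phi_eq_cons, List.cons_append, List.append_assoc, hs, ht,
      List.cons_prefix_cons, true_and] at h
    obtain ⟨rfl, hst⟩ := phi_tail_append_prefix m h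
    exact List.cons_prefix_cons.mpr ⟨rfl, prefix_of_phiW_append_zero_prefix (hs ▸ ht ▸ hst)⟩

lemma exists_eq_length_phiW_take_of_getElem?_eq_zero :
    ∀ (z : List ℕ) {p : ℕ}, (phiW m z ++ [0])[p]? = some 0 →
      ∃ q ≤ z.length, p = (phiW m (z.take q)).length
  | [], p, h => ⟨0, le_rfl, by cases p <;> simp_all [phiW]⟩
  | a :: z, 0, _ => ⟨0, Nat.zero_le _, by simp [phiW]⟩
  | a :: z, p + 1, h => by
    set T : List ℕ := if a = m - 1 then [] else [a + 1] with hT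
    simp only [phiW_cons, phi_eq_cons, ← hT, List.cons_append, List.getElem?_cons_succ,
      List.append_assoc] at h
    by_cases hp : p < T.length
    · rw [List.getElem?_append_left hp] at h
      split_ifs at hT <;> simp_all
    · rw [List.getElem?_append_right (not_lt.mp hp)] at h
      obtain ⟨q, hq, hpq⟩ := exists_eq_length_phiW_take_of_getElem?_eq_zero z h
      refine ⟨q + 1, by simpa using hq, ?_⟩
      simp only [List.take_succ_cons, phiW_cons, phi_eq_cons, ← hT, List.cons_append,
        List.length_cons, List.length_append]
      omega

lemma drop_length_phiW_take (z : List ℕ) (q : ℕ) :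
    (phiW m z ++ [0]).drop (phiW m (z.take q)).length = phiW m (z.drop q) ++ [0] := by
  have hsplit : phiW m z ++ [0] = phiW m (z.take q) ++ (phiW m (z.drop q) ++ [0]) := by
    rw [← List.append_assoc, ← phiW_append, List.take_append_drop]
  rw [hsplit, List.drop_left]

lemma exists_prefix_drop_of_phiW_append_zero_prefix_drop {u w : List ℕ} {p : ℕ}
    (h : phiW m u ++ [0] <+: (phiW m w ++ [0]).drop p) :
    ∃ q ≤ w.length, p = (phiW m (w.take q)).length ∧ u <+: w.drop q := by
  obtain ⟨s, hs⟩ := exists_phiW_append_zero_eq_cons m u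
  obtain ⟨r, hr⟩ := hs ▸ h
  have hzero : (phiW m w ++ [0])[p]? = some 0 := by
    rw [← add_zero p, ← List.getElem?_drop, ← hr]; rfl
  obtain ⟨q, hq, rfl⟩ := exists_eq_length_phiW_take_of_getElem?_eq_zero m w hzero
  rw [drop_length_phiW_take] at h
  exact ⟨q, hq, rfl, prefix_of_phiW_append_zero_prefix m h⟩

lemma ub_succ (k : ℕ) : ub m (k + 1) = phiW m (ub m k) ++ [0] := by
  induction k with
  | zero => rfl
  | succ k ih =>
    change hb m (k + 1) ++ ub m (k + 1) = phiW m (hb m k ++ ub m k) ++ [0]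
    rw [phiW_append, List.append_assoc, ← ih]
    rfl

lemma ub_prefix_ub_succ (k : ℕ) : ub m k <+: ub m (k + 1) := by
  induction k with
  | zero => exact List.nil_prefix
  | succ k ih =>
    rw [ub_succ m k, ub_succ m (k + 1)]
    exact phiW_append_zero_prefix m ih

lemma hb_prefix_hb_succ (n : ℕ) : hb m n <+: hb m (n + 1) := by
  induction n with
  | zero => exact ⟨if 0 = m - 1 then [] else [1], by simp [hb, phiW, phi_eq_cons]⟩
  | succ n ih => exact phiW_prefix m ih

lemma hb_prefix_hb {i j : ℕ} (h : i ≤ j) : hb m i <+: hb m j := by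
  induction j, h using Nat.le_induction with
  | base => exact List.prefix_rfl
  | succ j _ ih => exact ih.trans (hb_prefix_hb_succ m j)

lemma hb_prefix_ub {j K : ℕ} (h : j < K) : hb m j <+: ub m K := by
  obtain ⟨K, rfl⟩ : ∃ K', K = K' + 1 := ⟨K - 1, by omega⟩
  exact (hb_prefix_hb m (Nat.lt_succ_iff.mp h)).trans (List.prefix_append _ _)

lemma hb_ne_nil (n : ℕ) : hb m n ≠ [] :=
  List.ne_nil_of_length_pos (List.IsPrefix.length_le (hb_prefix_hb m (Nat.zero_le n)))

lemma length_ub_succ (k : ℕ) : (ub m (k + 1)).length = (hb m k).length + (ub m k).length :=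
  List.length_append

lemma strictMono_length_ub : StrictMono fun k => (ub m k).length :=
  strictMono_nat_of_lt_succ fun k => by
    rw [length_ub_succ]
    exact Nat.lt_add_of_pos_left (List.length_pos_iff.mpr (hb_ne_nil m k))

lemma ub_ne_nil {k : ℕ} (hk : k ≠ 0) : ub m k ≠ [] :=
  List.ne_nil_of_length_pos ((strictMono_length_ub m).lt_iff_lt.mpr (Nat.pos_of_ne_zero hk))

theorem length_hb_le_of_prefix_drop_ub :
    ∀ {j K p : ℕ}, ub m j <+: (ub m K).drop p → 0 < p → (hb m j).length ≤ p
  | 0, _, _, _, hp => hp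
  | j + 1, 0, p, h, _ =>
    absurd (List.prefix_nil.mp (by simpa [ub] using h)) (ub_ne_nil m j.succ_ne_zero)
  | j + 1, K + 1, p, h, hp => by
    rw [ub_succ, ub_succ] at h
    obtain ⟨q, hqK, rfl, hq⟩ := exists_prefix_drop_of_phiW_append_zero_prefix_drop m h
    have hq0 : 0 < q := Nat.pos_of_ne_zero (by rintro rfl; simp [phiW] at hp)
    have hjq : (hb m j).length ≤ q := length_hb_le_of_prefix_drop_ub hq hq0
    have hjK : j < K := by
      have := hq.length_le
      rw [List.length_drop] at this
      exact (strictMono_length_ub m).lt_iff_lt.mp (by omega)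
    have hpre : hb m j <+: (ub m K).take q := by
      rw [List.prefix_iff_eq_take.mp (hb_prefix_ub m hjK)]
      exact List.take_prefix_take_left hjq
    exact (phiW_prefix m hpre).length_le

lemma occ_ub_ub_succ (j : ℕ) : occ (ub m j) (ub m (j + 1)) = 2 := by
  apply occ_eq_two (List.length_pos_iff.mpr (hb_ne_nil m j)) (by rw [length_ub_succ]; omega)
  intro i hi
  constructor
  · intro h
    refine or_iff_not_imp_left.mpr fun hi0 => le_antisymm ?_
      (length_hb_le_of_prefix_drop_ub m h (Nat.pos_of_ne_zero hi0))
    have := h.length_le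
    rw [List.length_drop] at this
    rw [length_ub_succ] at this hi
    omega
  · rintro (rfl | rfl)
    · exact ub_prefix_ub_succ m j
    · change ub m j <+: (hb m j ++ ub m j).drop _
      rw [List.drop_left]

end

/-- for `m ≥ 2` and `n ≥ 2`, the palindromic prefix `u_n` of the
`m`-bonacci word is closed; more precisely `u_{n-1}` is a border of `u_n` occurring
exactly twice in `u_n` (here `ub m k` is the paper's `u_{k+1}`). -/
theorem ub_closed :
    ∀ m : ℕ, 2 ≤ m → ∀ n : ℕ, 2 ≤ n →
      ub m (n - 2) <+: ub m (n - 1) ∧ ub m (n - 2) <:+ ub m (n - 1) ∧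
      occ (ub m (n - 2)) (ub m (n - 1)) = 2 ∧ ClosedWord (ub m (n - 1)) := by
  intro m _ n hn
  obtain ⟨j, rfl⟩ : ∃ j, n = j + 2 := ⟨n - 2, by omega⟩
  simp only [Nat.add_sub_cancel, show j + 2 - 1 = j + 1 by omega]
  have hpre := ub_prefix_ub_succ m j
  have hsuf : ub m j <:+ ub m (j + 1) := List.suffix_append _ _
  have hocc := occ_ub_ub_succ m j
  refine ⟨hpre, hsuf, hocc, ?_⟩
  rcases Nat.eq_zero_or_pos j with rfl | hj
  · exact Or.inl rfl
  · exact Or.inr ⟨ub m j, ub_ne_nil m hj.ne', strictMono_length_ub m j.lt_succ_self, hpre, hsuf,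
      hocc⟩
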